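/- arXiv:2304.05962 — 3 statements merged into one kernel-verified Lean document; each statement's English description precedes it below -/
import Mathlib

section
/- Let S be a finite nonempty set of states, A a finite nonempty set of actions, P : S × A → Δ(S) a transition function, R : S × A → ℝ a reward function, and γ ∈ [0,1) a discount factor, and let V* : S → ℝ be the unique solution of the Bellman optimality equation. If a function V : S → ℝ satisfies the linear-programming (superharmonicity) constraints V(s) ≥ R(s,a) + γ Σ_{s'∈S} P(s'|s,a) V(s') for all s ∈ S and a ∈ A, then V is an element-wise upper bound on the optimal value function: V(s) ≥ V*(s) for all s ∈ S. -/
/-- Any function satisfying the linear-programming (superharmonicity)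
constraints is an element-wise upper bound on the optimal value function. -/
theorem superharmonic_upper_bound
    {S A : Type*} [Fintype S] [Fintype A] [Nonempty S] [Nonempty A]
    (P : S → A → S → ℝ)
    (hP0 : ∀ s a s', 0 ≤ P s a s')
    (hP1 : ∀ s a, ∑ s', P s a s' = 1)
    (R : S → A → ℝ) (γ : ℝ) (hγ0 : 0 ≤ γ) (hγ1 : γ < 1)
    (Vstar : S → ℝ)
    (hVstar : ∀ s, Vstar s =
      Finset.univ.sup' Finset.univ_nonempty
        (fun a => R s a + γ * ∑ s', P s a s' * Vstar s'))
    (V : S → ℝ)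
    (hV : ∀ s a, V s ≥ R s a + γ * ∑ s', P s a s' * V s') :
    ∀ s, V s ≥ Vstar s := by
  -- Let M be the maximum of Vstar - V, attained at s0.
  obtain ⟨s0, -, hs0⟩ := Finset.exists_max_image (Finset.univ : Finset S)
    (fun s => Vstar s - V s) Finset.univ_nonempty
  set M := Vstar s0 - V s0 with hM
  have key : M ≤ γ * M := by
    -- choose an optimal action at s0
    obtain ⟨a, -, ha⟩ := Finset.exists_mem_eq_sup' (Finset.univ_nonempty (α := A))
      (fun a => R s0 a + γ * ∑ s', P s0 a s' * Vstar s')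
    have h1 : Vstar s0 = R s0 a + γ * ∑ s', P s0 a s' * Vstar s' := by
      rw [hVstar s0, ha]
    have h2 : R s0 a + γ * ∑ s', P s0 a s' * V s' ≤ V s0 := hV s0 a
    have h3 : ∑ s', P s0 a s' * Vstar s' - ∑ s', P s0 a s' * V s'
        = ∑ s', P s0 a s' * (Vstar s' - V s') := by
      rw [← Finset.sum_sub_distrib]
      exact Finset.sum_congr rfl (fun s' _ => by ring)
    have h4 : ∑ s', P s0 a s' * (Vstar s' - V s') ≤ ∑ s', P s0 a s' * M := by
      apply Finset.sum_le_sum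
      intro s' _
      exact mul_le_mul_of_nonneg_left (hs0 s' (Finset.mem_univ s')) (hP0 s0 a s')
    have h5 : ∑ s', P s0 a s' * M = M := by
      rw [← Finset.sum_mul, hP1, one_mul]
    have : M ≤ γ * (∑ s', P s0 a s' * Vstar s' - ∑ s', P s0 a s' * V s') := by
      rw [hM, h1]; nlinarith [h2]
    calc M ≤ γ * (∑ s', P s0 a s' * Vstar s' - ∑ s', P s0 a s' * V s') := this
      _ = γ * ∑ s', P s0 a s' * (Vstar s' - V s') := by rw [h3]
      _ ≤ γ * ∑ s', P s0 a s' * M := by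
          exact mul_le_mul_of_nonneg_left (by rw [h5] at h4 ⊢; exact h4) hγ0
      _ = γ * M := by rw [h5]
  have hM0 : M ≤ 0 := by nlinarith
  intro s
  have := hs0 s (Finset.mem_univ s)
  linarith
end

section
/- (Lemma 1: MILP equivalence for zero-sum worst-case absolute regret minimization.) Let S be a finite nonempty set of states containing an absorbing sink state s_sink, A a finite nonempty set of actions, P : S × A → Δ(S) a transition function with P(s_sink|s_sink,a) = 1 for all a, γ ∈ [0,1) a discount factor, ν ∈ Δ(S) an initial distribution, and R_1, …, R_N : S × A → ℝ reward functions with R_i(s_sink, a) = 0 for all i, a. Let 𝒳 be a nonempty set of sensor allocations x : S → {0,1} with x(s_sink) = 0 for all x ∈ 𝒳. For x ∈ 𝒳 and each i, let V*_{i,x} : S → ℝ be the unique solution of the Bellman optimality equation for (S, A, P^x, R_i, γ), and set v_i = min_{x∈𝒳} Σ_{s∈S} ν(s) V*_{i,x}(s). Then the worst-case absolute regret minimum min_{x∈𝒳} max_{1≤i≤N} ( Σ_{s∈S} ν(s) V*_{i,x}(s) − v_i ) equals the infimum of y over all triples (y, x, (V_i)_{i=1}^N) with x ∈ 𝒳 and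 V_i : S → ℝ satisfying, for all i: y ≥ Σ_{s∈S} ν(s) V_i(s) − v_i, and V_i(s) ≥ R_i(s,a) + γ Σ_{s'∈S} P^x(s'|s,a) V_i(s') for all s ∈ S and a ∈ A; moreover this infimum is attained. -/
/-- Superharmonic functions dominate the Bellman fixed point. -/
lemma bellman_fixed_le {S A : Type*} [Fintype S] [Fintype A] [Nonempty S] [Nonempty A]
    (Q : S → A → S → ℝ) (hQ0 : ∀ s a s', 0 ≤ Q s a s')
    (hQ1 : ∀ s a, ∑ s', Q s a s' = 1)
    (γ : ℝ) (hγ0 : 0 ≤ γ) (hγ1 : γ < 1)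
    (r : S → A → ℝ) (Vs V : S → ℝ)
    (hVs : ∀ s, Vs s = Finset.univ.sup' Finset.univ_nonempty
        (fun a => r s a + γ * ∑ s', Q s a s' * Vs s'))
    (hV : ∀ s a, V s ≥ r s a + γ * ∑ s', Q s a s' * V s') :
    ∀ s, Vs s ≤ V s := by
  set M := Finset.univ.sup' Finset.univ_nonempty (fun s => Vs s - V s) with hM
  have hMle : M ≤ 0 := by
    obtain ⟨s0, -, hs0⟩ := Finset.exists_mem_eq_sup' Finset.univ_nonempty
      (fun s => Vs s - V s)
    obtain ⟨a0, -, ha0⟩ := Finset.exists_mem_eq_sup' (Finset.univ_nonempty (α := A))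
      (fun a => r s0 a + γ * ∑ s', Q s0 a s' * Vs s')
    have h1 : Vs s0 = r s0 a0 + γ * ∑ s', Q s0 a0 s' * Vs s' := by
      rw [hVs s0, ha0]
    have h2 : V s0 ≥ r s0 a0 + γ * ∑ s', Q s0 a0 s' * V s' := hV s0 a0
    have hsum : ∑ s', Q s0 a0 s' * Vs s' - ∑ s', Q s0 a0 s' * V s' ≤ M := by
      rw [← Finset.sum_sub_distrib]
      calc ∑ s', (Q s0 a0 s' * Vs s' - Q s0 a0 s' * V s')
          ≤ ∑ s', Q s0 a0 s' * M := by
            apply Finset.sum_le_sum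
            intro s' _
            rw [← mul_sub]
            exact mul_le_mul_of_nonneg_left
              (Finset.le_sup' (fun s => Vs s - V s) (Finset.mem_univ s'))
              (hQ0 s0 a0 s')
        _ = M := by rw [← Finset.sum_mul, hQ1, one_mul]
    have hMγ : M ≤ γ * M := by
      calc M = Vs s0 - V s0 := hs0
        _ ≤ (r s0 a0 + γ * ∑ s', Q s0 a0 s' * Vs s')
            - (r s0 a0 + γ * ∑ s', Q s0 a0 s' * V s') := by
              rw [h1]; linarith
        _ = γ * (∑ s', Q s0 a0 s' * Vs s' - ∑ s', Q s0 a0 s' * V s') := by ring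
        _ ≤ γ * M := mul_le_mul_of_nonneg_left hsum hγ0
    nlinarith
  intro s
  have h3 : Vs s - V s ≤ M := Finset.le_sup' (fun s => Vs s - V s) (Finset.mem_univ s)
  linarith

/-- Lemma 1: the worst-case absolute regret minimum in the zero-sum
attack-defend game equals the optimal value of the optimization problem
(2)-(5), and this optimum is attained. -/
theorem zero_sum_regret_milp_equivalence
    {S A : Type*} [Fintype S] [Fintype A] [Nonempty S] [Nonempty A]
    [DecidableEq S]
    (ssink : S)
    (P : S → A → S → ℝ)
    (hP0 : ∀ s a s', 0 ≤ P s a s')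
    (hP1 : ∀ s a, ∑ s', P s a s' = 1)
    (habs : ∀ a, P ssink a ssink = 1)
    (γ : ℝ) (hγ0 : 0 ≤ γ) (hγ1 : γ < 1)
    (ν : S → ℝ) (hν0 : ∀ s, 0 ≤ ν s) (hν1 : ∑ s, ν s = 1)
    (N : ℕ) (hN : 0 < N)
    (R : Fin N → S → A → ℝ) (hR0 : ∀ i a, R i ssink a = 0)
    (𝒳 : Finset (S → Bool)) (h𝒳 : 𝒳.Nonempty)
    (hsink : ∀ x ∈ 𝒳, x ssink = false)
    (Px : (S → Bool) → S → A → S → ℝ)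
    (hPx : ∀ x s a s', Px x s a s' =
      if x s = true then (if s' = ssink then 1 else 0) else P s a s')
    (Vstar : Fin N → (S → Bool) → S → ℝ)
    (hVstar : ∀ i, ∀ x ∈ 𝒳, ∀ s, Vstar i x s =
      Finset.univ.sup' Finset.univ_nonempty
        (fun a => R i s a + γ * ∑ s', Px x s a s' * Vstar i x s'))
    (v : Fin N → ℝ)
    (hv : ∀ i, v i = 𝒳.inf' h𝒳 (fun x => ∑ s, ν s * Vstar i x s)) :
    IsLeast
      {y : ℝ | ∃ x ∈ 𝒳, ∃ V : Fin N → S → ℝ,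
        (∀ i, y ≥ ∑ s, ν s * V i s - v i) ∧
        (∀ i s a, V i s ≥ R i s a + γ * ∑ s', Px x s a s' * V i s')}
      (𝒳.inf' h𝒳 (fun x =>
        Finset.univ.sup'
          (Finset.univ_nonempty_iff.mpr (Fin.pos_iff_nonempty.mp hN))
          (fun i : Fin N => ∑ s, ν s * Vstar i x s - v i))) := by
  have hQ0 : ∀ x ∈ 𝒳, ∀ s a s', 0 ≤ Px x s a s' := by
    intro x hx s a s'
    rw [hPx]
    split
    · split <;> norm_num
    · exact hP0 s a s'
  have hQ1 : ∀ x ∈ 𝒳, ∀ s a, ∑ s', Px x s a s' = 1 := by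
    intro x hx s a
    have : ∀ s', Px x s a s' = if x s = true then (if s' = ssink then 1 else 0) else P s a s' :=
      fun s' => hPx x s a s'
    simp_rw [this]
    split
    · simp
    · exact hP1 s a
  constructor
  · obtain ⟨x0, hx0, hx0eq⟩ := Finset.exists_mem_eq_inf' h𝒳 (fun x =>
      Finset.univ.sup'
        (Finset.univ_nonempty_iff.mpr (Fin.pos_iff_nonempty.mp hN))
        (fun i : Fin N => ∑ s, ν s * Vstar i x s - v i))
    refine ⟨x0, hx0, fun i => Vstar i x0, ?_, ?_⟩
    · intro i
      rw [hx0eq]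
      exact Finset.le_sup' (fun i : Fin N => ∑ s, ν s * Vstar i x0 s - v i)
        (Finset.mem_univ i)
    · intro i s a
      show Vstar i x0 s ≥ R i s a + γ * ∑ s', Px x0 s a s' * Vstar i x0 s'
      rw [hVstar i x0 hx0 s]
      exact Finset.le_sup' (fun a => R i s a + γ * ∑ s', Px x0 s a s' * Vstar i x0 s')
        (Finset.mem_univ a)
  · rintro y ⟨x, hx, V, hy, hbell⟩
    apply le_trans (Finset.inf'_le _ hx)
    apply Finset.sup'_le
    intro i _
    have hle : ∀ s, Vstar i x s ≤ V i s :=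
      bellman_fixed_le (Px x) (hQ0 x hx) (hQ1 x hx) γ hγ0 hγ1 (R i)
        (Vstar i x) (V i) (hVstar i x hx) (hbell i)
    have : ∑ s, ν s * Vstar i x s ≤ ∑ s, ν s * V i s :=
      Finset.sum_le_sum fun s _ => mul_le_mul_of_nonneg_left (hle s) (hν0 s)
    linarith [hy i]
end

section
/- (Correctness of the attacker best-response constraints.) Let S be a finite nonempty set of states, A a finite nonempty set of actions, P : S × A → Δ(S) a transition function, R : S × A → ℝ a reward function, and γ ∈ [0,1) a discount factor, with V* : S → ℝ the unique solution of the Bellman optimality equation. Let Z ∈ ℝ, let π : S → A be a deterministic policy, and suppose V : S → ℝ satisfies for all s ∈ S and a ∈ A: 0 ≤ V(s) − (R(s,a) + γ Σ_{s'∈S} P(s'|s,a) V(s')) ≤ (1 − 𝟙[π(s) = a])·Z, where 𝟙[π(s)=a] is 1 if π(s)=a and 0 otherwise. Then V = V* and the policy-evaluation equation holds for π: V(s) = R(s,π(s)) + γ Σ_{s'∈S} P(s'|s,π(s)) V(s') for all s ∈ S (so π is an optimal policy). -/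
/-- Correctness of the attacker best-response constraints: the big-Z
constraints force `V` to be the optimal value function and `π` to be an
optimal (best-response) policy. -/
theorem best_response_constraints_correct
    {S A : Type*} [Fintype S] [Fintype A] [Nonempty S] [Nonempty A]
    [DecidableEq A]
    (P : S → A → S → ℝ)
    (hP0 : ∀ s a s', 0 ≤ P s a s')
    (hP1 : ∀ s a, ∑ s', P s a s' = 1)
    (R : S → A → ℝ) (γ : ℝ) (hγ0 : 0 ≤ γ) (hγ1 : γ < 1)
    (Vstar : S → ℝ)
    (hVstar : ∀ s, Vstar s =
      Finset.univ.sup' Finset.univ_nonempty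
        (fun a => R s a + γ * ∑ s', P s a s' * Vstar s'))
    (Z : ℝ) (π : S → A) (V : S → ℝ)
    (hV : ∀ s a,
      0 ≤ V s - (R s a + γ * ∑ s', P s a s' * V s') ∧
      V s - (R s a + γ * ∑ s', P s a s' * V s') ≤
        (1 - if π s = a then (1 : ℝ) else 0) * Z) :
    (∀ s, V s = Vstar s) ∧
      ∀ s, V s = R s (π s) + γ * ∑ s', P s (π s) s' * V s' := by
  -- Policy evaluation equation for π
  have hpi : ∀ s, V s = R s (π s) + γ * ∑ s', P s (π s) s' * V s' := by
    intro s
    obtain ⟨h1, h2⟩ := hV s (π s)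
    simp at h2
    have : V s - (R s (π s) + γ * ∑ s', P s (π s) s' * V s') = 0 := by linarith
    linarith
  -- V satisfies the Bellman optimality equation
  have hBell : ∀ s, V s =
      Finset.univ.sup' Finset.univ_nonempty
        (fun a => R s a + γ * ∑ s', P s a s' * V s') := by
    intro s
    apply le_antisymm
    · calc V s = R s (π s) + γ * ∑ s', P s (π s) s' * V s' := hpi s
      _ ≤ _ := Finset.le_sup' (fun a => R s a + γ * ∑ s', P s a s' * V s') (Finset.mem_univ (π s))
    · apply Finset.sup'_le
      intro a _
      have := (hV s a).1
      linarith
  -- Contraction / uniqueness argument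
  have hM : ∀ s, V s = Vstar s := by
    set M : ℝ := Finset.univ.sup' Finset.univ_nonempty (fun s => |V s - Vstar s|) with hMdef
    have hM0 : 0 ≤ M := by
      obtain ⟨s⟩ := ‹Nonempty S›
      exact le_trans (abs_nonneg _) (Finset.le_sup' (fun s => |V s - Vstar s|) (Finset.mem_univ s))
    have hptw : ∀ s, |V s - Vstar s| ≤ γ * M := by
      intro s
      rw [abs_le, and_comm]
      have key : ∀ (a : A),
          |(γ * ∑ s', P s a s' * V s') - (γ * ∑ s', P s a s' * Vstar s')| ≤ γ * M := by
        intro a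
        rw [← mul_sub, abs_mul, abs_of_nonneg hγ0, ← Finset.sum_sub_distrib]
        refine mul_le_mul_of_nonneg_left ?_ hγ0
        calc |∑ s', (P s a s' * V s' - P s a s' * Vstar s')|
            ≤ ∑ s', |P s a s' * V s' - P s a s' * Vstar s'| := Finset.abs_sum_le_sum_abs _ _
          _ ≤ ∑ s', P s a s' * M := by
              apply Finset.sum_le_sum
              intro s' _
              rw [← mul_sub, abs_mul, abs_of_nonneg (hP0 s a s')]
              exact mul_le_mul_of_nonneg_left
                (Finset.le_sup' (fun s => |V s - Vstar s|) (Finset.mem_univ s')) (hP0 s a s')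
          _ = M := by rw [← Finset.sum_mul, hP1, one_mul]
      constructor
      · rw [hBell s, hVstar s]
        have h1 : ∀ a ∈ Finset.univ, R s a + γ * ∑ s', P s a s' * V s' ≤
            (Finset.univ.sup' Finset.univ_nonempty
              (fun a => R s a + γ * ∑ s', P s a s' * Vstar s')) + γ * M := by
          intro a _
          have h2 := (abs_le.mp (key a)).2
          have h3 : R s a + γ * ∑ s', P s a s' * Vstar s' ≤
              Finset.univ.sup' Finset.univ_nonempty
                (fun a => R s a + γ * ∑ s', P s a s' * Vstar s') :=
            Finset.le_sup' (fun a => R s a + γ * ∑ s', P s a s' * Vstar s') (Finset.mem_univ a)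
          linarith
        have := Finset.sup'_le Finset.univ_nonempty _ h1
        linarith
      · rw [hBell s, hVstar s]
        have h1 : ∀ a ∈ Finset.univ, R s a + γ * ∑ s', P s a s' * Vstar s' ≤
            (Finset.univ.sup' Finset.univ_nonempty
              (fun a => R s a + γ * ∑ s', P s a s' * V s')) + γ * M := by
          intro a _
          have h2 := (abs_le.mp (key a)).1
          have h3 : R s a + γ * ∑ s', P s a s' * V s' ≤
              Finset.univ.sup' Finset.univ_nonempty
                (fun a => R s a + γ * ∑ s', P s a s' * V s') :=
            Finset.le_sup' (fun a => R s a + γ * ∑ s', P s a s' * V s') (Finset.mem_univ a)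
          linarith
        have := Finset.sup'_le Finset.univ_nonempty _ h1
        linarith
    have hMle : M ≤ γ * M := Finset.sup'_le _ _ (fun s _ => hptw s)
    have hMzero : M = 0 := by nlinarith
    intro s
    have : |V s - Vstar s| ≤ 0 := hMzero ▸ Finset.le_sup' (fun s => |V s - Vstar s|) (Finset.mem_univ s)
    have := abs_nonpos_iff.mp (by linarith : |V s - Vstar s| ≤ 0)
    linarith
  exact ⟨hM, hpi⟩
end
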